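/- arXiv:1404.1513 — 8 statements merged into one kernel-verified Lean document; each statement's English description precedes it below -/
import Mathlib

section
/- Let β₁, β₂ ∈ ℝ and let E(β₁,β₂) = (1/5)[1 + β₁ + 2β₂ + 5β₁β₂ + α(β₁ + 3β₂ + 8β₁β₂)] with α = (1+√5)/2. If E(β₁,β₂) > 0, then f_n² + β₁f_{n+1}² + β₂f_{n+2}² + β₁β₂f_{n+3}² tends to +∞ as n → ∞. -/
noncomputable def goldenα : ℝ := (1 + Real.sqrt 5) / 2

noncomputable def Efun (β₁ β₂ : ℝ) : ℝ :=
  (1 / 5) * (1 + β₁ + 2 * β₂ + 5 * β₁ * β₂ + goldenα * (β₁ + 3 * β₂ + 8 * β₁ * β₂))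

lemma fibkey (b1 b2 s x y : ℝ) (h5 : s ^ 2 = 5) :
    (x - y) ^ 2 / 5 + b1 * (x * ((1 + s) / 2) - y * ((1 - s) / 2)) ^ 2 / 5
      + b2 * (x * ((1 + s) / 2) ^ 2 - y * ((1 - s) / 2) ^ 2) ^ 2 / 5
      + b1 * b2 * (x * ((1 + s) / 2) ^ 3 - y * ((1 - s) / 2) ^ 3) ^ 2 / 5
    = (1 / 5) * (1 + b1 + 2 * b2 + 5 * b1 * b2 + (1 + s) / 2 * (b1 + 3 * b2 + 8 * b1 * b2)) * x ^ 2
      + (1 / 5) * (1 + b1 * ((1 - s) / 2) ^ 2 + b2 * ((1 - s) / 2) ^ 4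
            + b1 * b2 * ((1 - s) / 2) ^ 6) * y ^ 2
      + (-(2 / 5) * (1 - b1 + b2 - b1 * b2)) * (x * y) := by
  linear_combination ((-3/40:ℝ)*b2*x*y + (11/80:ℝ)*b2*x^2 + (1/10:ℝ)*b1*x*y + (1/20:ℝ)*b1*x^2
    + (13/160:ℝ)*b1*b2*x*y + (23/64:ℝ)*b1*b2*x^2 + (1/20:ℝ)*s*b2*x^2 + (5/32:ℝ)*s*b1*b2*x^2
    - (1/40:ℝ)*s^2*b2*x*y + (1/80:ℝ)*s^2*b2*x^2 + (1/80:ℝ)*s^2*b1*b2*x*y + (1/16:ℝ)*s^2*b1*b2*x^2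
    + (3/160:ℝ)*s^3*b1*b2*x^2 + (1/160:ℝ)*s^4*b1*b2*x*y + (1/320:ℝ)*s^4*b1*b2*x^2) * h5

theorem norm_fib_quaternion_tendsto_atTop (β₁ β₂ : ℝ) (hE : Efun β₁ β₂ > 0) :
    Filter.Tendsto
      (fun n : ℕ => (Nat.fib n : ℝ) ^ 2 + β₁ * (Nat.fib (n + 1) : ℝ) ^ 2
        + β₂ * (Nat.fib (n + 2) : ℝ) ^ 2 + β₁ * β₂ * (Nat.fib (n + 3) : ℝ) ^ 2)
      Filter.atTop Filter.atTop := by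
  have h5 : Real.sqrt 5 ^ 2 = 5 := Real.sq_sqrt (by norm_num)
  have hs0 : (0:ℝ) ≤ Real.sqrt 5 := Real.sqrt_nonneg 5
  set A : ℝ := (1 / 5) * (1 + β₁ * ((1 - Real.sqrt 5) / 2) ^ 2
      + β₂ * ((1 - Real.sqrt 5) / 2) ^ 4 + β₁ * β₂ * ((1 - Real.sqrt 5) / 2) ^ 6) with hA
  set B : ℝ := -(2 / 5) * (1 - β₁ + β₂ - β₁ * β₂) with hB
  have fib2 : ∀ m : ℕ, (Nat.fib m : ℝ) ^ 2
      = (((1 + Real.sqrt 5) / 2) ^ m - ((1 - Real.sqrt 5) / 2) ^ m) ^ 2 / 5 := by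
    intro m
    rw [Real.coe_fib_eq, div_pow, h5]
  have key : ∀ n : ℕ,
      (Nat.fib n : ℝ) ^ 2 + β₁ * (Nat.fib (n + 1) : ℝ) ^ 2
        + β₂ * (Nat.fib (n + 2) : ℝ) ^ 2 + β₁ * β₂ * (Nat.fib (n + 3) : ℝ) ^ 2
      = Efun β₁ β₂ * (((1 + Real.sqrt 5) / 2) ^ 2) ^ n
        + A * (((1 - Real.sqrt 5) / 2) ^ 2) ^ n + B * (-1 : ℝ) ^ n := by
    intro n
    have hxy : ((1 + Real.sqrt 5) / 2) ^ n * ((1 - Real.sqrt 5) / 2) ^ n = (-1 : ℝ) ^ n := by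
      rw [← mul_pow]
      congr 1
      linear_combination (-1/4 : ℝ) * h5
    have p1 : ∀ a : ℝ, a ^ (n + 1) = a ^ n * a := fun a => pow_succ a n
    have p2 : ∀ a : ℝ, a ^ (n + 2) = a ^ n * a ^ 2 := fun a => pow_add a n 2
    have p3 : ∀ a : ℝ, a ^ (n + 3) = a ^ n * a ^ 3 := fun a => pow_add a n 3
    have p0 : ∀ a : ℝ, (a ^ 2) ^ n = (a ^ n) ^ 2 := fun a => by
      rw [← pow_mul, ← pow_mul, mul_comm]
    rw [fib2 n, fib2 (n + 1), fib2 (n + 2), fib2 (n + 3), p1, p1, p2, p2, p3, p3, p0, p0,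
      ← hxy, hA, hB]
    simp only [Efun, goldenα]
    linear_combination fibkey β₁ β₂ (Real.sqrt 5) (((1 + Real.sqrt 5) / 2) ^ n)
      (((1 - Real.sqrt 5) / 2) ^ n) h5
  have hφ1 : (1:ℝ) < ((1 + Real.sqrt 5) / 2) ^ 2 := by nlinarith
  have hψ0 : (0:ℝ) ≤ ((1 - Real.sqrt 5) / 2) ^ 2 := sq_nonneg _
  have hψ1 : ((1 - Real.sqrt 5) / 2) ^ 2 ≤ 1 := by nlinarith
  have t1 : Filter.Tendsto (fun n : ℕ => (((1 + Real.sqrt 5) / 2) ^ 2) ^ n)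
      Filter.atTop Filter.atTop := tendsto_pow_atTop_atTop_of_one_lt hφ1
  have t2 := t1.const_mul_atTop hE
  have t3 := Filter.tendsto_atTop_add_const_right Filter.atTop (-(|A| + |B|)) t2
  refine Filter.tendsto_atTop_mono (fun n => ?_) t3
  have hp : (0:ℝ) ≤ (((1 - Real.sqrt 5) / 2) ^ 2) ^ n := pow_nonneg hψ0 n
  have hq : (((1 - Real.sqrt 5) / 2) ^ 2) ^ n ≤ 1 := pow_le_one₀ hψ0 hψ1
  have h1 : -|A| ≤ A * (((1 - Real.sqrt 5) / 2) ^ 2) ^ n := by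
    have habs : |A * (((1 - Real.sqrt 5) / 2) ^ 2) ^ n| ≤ |A| := by
      rw [abs_mul, abs_of_nonneg hp]
      nlinarith [abs_nonneg A]
    linarith [neg_abs_le (A * (((1 - Real.sqrt 5) / 2) ^ 2) ^ n)]
  have h2 : -|B| ≤ B * (-1 : ℝ) ^ n := by
    have habs : |B * (-1 : ℝ) ^ n| = |B| := by
      rw [abs_mul, abs_pow, abs_neg, abs_one, one_pow, mul_one]
    linarith [neg_abs_le (B * (-1 : ℝ) ^ n)]
  rw [key n]
  linarith
end

section
/- Let β₁, β₂ ∈ ℝ and let E(β₁,β₂) = (1/5)[1 + β₁ + 2β₂ + 5β₁β₂ + α(β₁ + 3β₂ + 8β₁β₂)] with α = (1+√5)/2. If E(β₁,β₂) < 0, then f_n² + β₁f_{n+1}² + β₂f_{n+2}² + β₁β₂f_{n+3}² tends to −∞ as n → ∞. -/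
/-!
By Binet's formula, `f_k² = (φ^(2k) - 2 (-1)^k + ψ^(2k)) / 5`, and `|ψ| < 1`, so `f_k²` differs
from `(φ²)^k / 5` by at most `3/5`. Hence every fixed combination `∑ c_j f_(n+j)²` is
`(φ²)^n · (∑ c_j (φ²)^j) / 5` up to a bounded error. For `c = (1, β₁, β₂, β₁β₂)` the leading
coefficient reduces, via `φ² = φ + 1`, to `E(β₁, β₂)`.
-/

open Real goldenRatio Filter

lemma goldenConj_sq_lt_one : ψ ^ 2 < 1 := by
  rw [goldenConj_sq]
  linarith [goldenConj_neg]

lemma abs_fib_sq_sub_le (k : ℕ) : |(Nat.fib k : ℝ) ^ 2 - (φ ^ 2) ^ k / 5| ≤ 3 / 5 := by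
  have hbinet : (Nat.fib k : ℝ) ^ 2 - (φ ^ 2) ^ k / 5 = ((ψ ^ 2) ^ k - 2 * (-1) ^ k) / 5 := by
    rw [coe_fib_eq, div_pow, sq_sqrt (by norm_num : (0 : ℝ) ≤ 5), ← goldenRatio_mul_goldenConj]
    generalize φ = a
    generalize ψ = b
    ring
  have hψ : |(ψ ^ 2) ^ k| ≤ 1 := by
    rw [abs_pow, abs_of_nonneg (sq_nonneg ψ)]
    exact pow_le_one₀ (sq_nonneg ψ) goldenConj_sq_lt_one.le
  rw [hbinet, abs_div, abs_of_pos (by norm_num : (0 : ℝ) < 5)]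
  calc |(ψ ^ 2) ^ k - 2 * (-1) ^ k| / 5 ≤ (|(ψ ^ 2) ^ k| + |2 * (-1) ^ k|) / 5 := by
        gcongr
        exact abs_sub _ _
    _ ≤ 3 / 5 := by
        rw [abs_mul, abs_neg_one_pow, abs_two]
        linarith

lemma sum_mul_fib_sq_le {m : ℕ} (c : Fin m → ℝ) (n : ℕ) :
    ∑ j, c j * (Nat.fib (n + j) : ℝ) ^ 2
      ≤ (∑ j, c j * (φ ^ 2) ^ (j : ℕ)) / 5 * (φ ^ 2) ^ n + 3 / 5 * ∑ j, |c j| := by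
  have hsplit : ∑ j, c j * (Nat.fib (n + j) : ℝ) ^ 2
      = (∑ j, c j * (φ ^ 2) ^ (j : ℕ)) / 5 * (φ ^ 2) ^ n
        + ∑ j, c j * ((Nat.fib (n + j) : ℝ) ^ 2 - (φ ^ 2) ^ (n + j) / 5) := by
    simp only [Finset.sum_div, Finset.sum_mul, ← Finset.sum_add_distrib, pow_add]
    congr 1 with j
    ring
  rw [hsplit, Finset.mul_sum]
  refine add_le_add_right (Finset.sum_le_sum fun j _ => ?_) _
  calc c j * ((Nat.fib (n + j) : ℝ) ^ 2 - (φ ^ 2) ^ (n + j) / 5)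
      ≤ |c j| * |(Nat.fib (n + j) : ℝ) ^ 2 - (φ ^ 2) ^ (n + j) / 5| := by
        rw [← abs_mul]
        exact le_abs_self _
    _ ≤ 3 / 5 * |c j| := by
        rw [mul_comm]
        gcongr
        exact abs_fib_sq_sub_le _

theorem tendsto_sum_mul_fib_sq_atBot {m : ℕ} (c : Fin m → ℝ)
    (hc : ∑ j, c j * (φ ^ 2) ^ (j : ℕ) < 0) :
    Tendsto (fun n => ∑ j, c j * (Nat.fib (n + j) : ℝ) ^ 2) atTop atBot := by
  have hgrowth : Tendsto (fun n : ℕ => (φ ^ 2) ^ n) atTop atTop :=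
    tendsto_pow_atTop_atTop_of_one_lt (one_lt_pow₀ one_lt_goldenRatio two_ne_zero)
  refine tendsto_atBot_mono (sum_mul_fib_sq_le c) ?_
  exact tendsto_atBot_add_const_right _ _ <|
    hgrowth.const_mul_atTop_of_neg (div_neg_of_neg_of_pos hc (by norm_num))

lemma Efun_eq_sum (β₁ β₂ : ℝ) :
    Efun β₁ β₂ = (∑ j, ![1, β₁, β₂, β₁ * β₂] j * (φ ^ 2) ^ (j : ℕ)) / 5 := by
  have hα : goldenα = φ := rfl
  simp only [Efun, hα, goldenRatio_sq, Fin.sum_univ_four, Fin.isValue, Matrix.cons_val_zero,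
    Fin.coe_ofNat_eq_mod, Nat.zero_mod, pow_zero, mul_one, Matrix.cons_val_one, Nat.one_mod,
    pow_one, Matrix.cons_val]
  linear_combination -(β₂ + β₁ * β₂ * (φ + 4)) / 5 * goldenRatio_sq

theorem norm_fib_quaternion_tendsto_atBot (β₁ β₂ : ℝ) (hE : Efun β₁ β₂ < 0) :
    Filter.Tendsto
      (fun n : ℕ => (Nat.fib n : ℝ) ^ 2 + β₁ * (Nat.fib (n + 1) : ℝ) ^ 2
        + β₂ * (Nat.fib (n + 2) : ℝ) ^ 2 + β₁ * β₂ * (Nat.fib (n + 3) : ℝ) ^ 2)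
      Filter.atTop Filter.atBot := by
  rw [Efun_eq_sum] at hE
  convert tendsto_sum_mul_fib_sq_atBot _ (by linarith : _ < (0 : ℝ)) using 2 with n
  simp [Fin.sum_univ_four]
end

section
/- Let β₁, β₂ ∈ ℝ with E(β₁,β₂) ≠ 0, where E(β₁,β₂) = (1/5)[1 + β₁ + 2β₂ + 5β₁β₂ + α(β₁ + 3β₂ + 8β₁β₂)] and α = (1+√5)/2. Then there exists a natural number n₀ such that for all n ≥ n₀, the norm n(F_n) = f_n² + β₁f_{n+1}² + β₂f_{n+2}² + β₁β₂f_{n+3}² is nonzero. -/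
/-!
By Binet's formula `√5 f_k = φ^k - ψ^k`, the norm `n(F_n)` is a quadratic form in `φ^n` and
`ψ^n`: `5 n(F_n) = A φ^{2n} - 2B (φψ)^n + C ψ^{2n}` with `A = 5 E(β₁, β₂)`. Since `φψ = -1` and
`|ψ/φ| < 1`, dividing by `φ^{2n}` gives `5 n(F_n) / φ^{2n} → A ≠ 0`, so `n(F_n) ≠ 0` eventually.
-/

open Filter Topology goldenRatio

namespace FibQuaternion

/-- `n(1 + s e₂ + s² e₃ + s³ e₄) = normWeight β₁ β₂ (s ^ 2)`, and the polar form of the norm pairs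
two such quaternions for `s` and `s'` to `normWeight β₁ β₂ (s * s')`. -/
def normWeight (β₁ β₂ t : ℝ) : ℝ := (1 + β₁ * t) * (1 + β₂ * t ^ 2)

def fibQuatNorm (β₁ β₂ : ℝ) (n : ℕ) : ℝ :=
  (Nat.fib n : ℝ) ^ 2 + β₁ * (Nat.fib (n + 1) : ℝ) ^ 2
    + β₂ * (Nat.fib (n + 2) : ℝ) ^ 2 + β₁ * β₂ * (Nat.fib (n + 3) : ℝ) ^ 2

variable (β₁ β₂ : ℝ)

lemma normWeight_goldenRatio_sq : normWeight β₁ β₂ (φ ^ 2) = 5 * Efun β₁ β₂ := by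
  have hα : goldenα = φ := rfl
  rw [normWeight, Efun, hα]
  linear_combination (β₁ + β₂ * (φ ^ 2 + φ + 2)
    + β₁ * β₂ * (φ ^ 4 + φ ^ 3 + 2 * φ ^ 2 + 3 * φ + 5)) * Real.goldenRatio_sq

lemma norm_pow_sub_pow (p q x y : ℝ) :
    (x - y) ^ 2 + β₁ * (p * x - q * y) ^ 2 + β₂ * (p ^ 2 * x - q ^ 2 * y) ^ 2
        + β₁ * β₂ * (p ^ 3 * x - q ^ 3 * y) ^ 2
      = normWeight β₁ β₂ (p ^ 2) * x ^ 2 - 2 * normWeight β₁ β₂ (p * q) * (x * y)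
        + normWeight β₁ β₂ (q ^ 2) * y ^ 2 := by
  simp only [normWeight]
  ring

lemma sqrt_five_mul_fib_add (n k : ℕ) :
    √5 * (Nat.fib (n + k) : ℝ) = φ ^ k * φ ^ n - ψ ^ k * ψ ^ n := by
  rw [Real.coe_fib_eq, mul_div_cancel₀ _ (by positivity), pow_add, pow_add,
    mul_comm (φ ^ n), mul_comm (ψ ^ n)]

lemma five_mul_fibQuatNorm (n : ℕ) :
    5 * fibQuatNorm β₁ β₂ n
      = normWeight β₁ β₂ (φ ^ 2) * (φ ^ n) ^ 2 - 2 * normWeight β₁ β₂ (-1) * (φ ^ n * ψ ^ n)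
        + normWeight β₁ β₂ (ψ ^ 2) * (ψ ^ n) ^ 2 := by
  have h0 := sqrt_five_mul_fib_add n 0
  have h1 := sqrt_five_mul_fib_add n 1
  have h2 := sqrt_five_mul_fib_add n 2
  have h3 := sqrt_five_mul_fib_add n 3
  simp only [pow_zero, one_mul, pow_one, add_zero] at h0 h1
  rw [← Real.goldenRatio_mul_goldenConj, ← norm_pow_sub_pow, ← h0, ← h1, ← h2, ← h3]
  simp only [fibQuatNorm, mul_pow, Real.sq_sqrt (show (0 : ℝ) ≤ 5 by norm_num)]
  ring

lemma abs_goldenConj_div_goldenRatio_lt_one : |ψ / φ| < 1 := by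
  rw [abs_div, abs_of_pos Real.goldenRatio_pos, div_lt_one Real.goldenRatio_pos]
  calc |ψ| < 1 := abs_lt.2 ⟨Real.neg_one_lt_goldenConj, Real.goldenConj_neg.trans one_pos⟩
    _ < φ := Real.one_lt_goldenRatio

lemma tendsto_five_mul_fibQuatNorm_div :
    Tendsto (fun n ↦ 5 * fibQuatNorm β₁ β₂ n / (φ ^ n) ^ 2) atTop
      (𝓝 (normWeight β₁ β₂ (φ ^ 2))) := by
  have hratio : Tendsto (fun n : ℕ ↦ (ψ / φ) ^ n) atTop (𝓝 0) :=
    tendsto_pow_atTop_nhds_zero_of_abs_lt_one abs_goldenConj_div_goldenRatio_lt_one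
  have hquadratic : Continuous fun t : ℝ ↦ normWeight β₁ β₂ (φ ^ 2)
      - 2 * normWeight β₁ β₂ (-1) * t + normWeight β₁ β₂ (ψ ^ 2) * t ^ 2 := by
    fun_prop
  have hlim := (hquadratic.tendsto 0).comp hratio
  simp only [mul_zero, sub_zero, zero_pow two_ne_zero, add_zero] at hlim
  refine hlim.congr fun n ↦ ?_
  have hφn : φ ^ n ≠ 0 := pow_ne_zero n Real.goldenRatio_ne_zero
  simp only [Function.comp_apply, five_mul_fibQuatNorm, div_pow]
  generalize φ ^ n = x at hφn ⊢
  generalize ψ ^ n = y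
  field_simp

end FibQuaternion

open FibQuaternion in
theorem norm_fib_quaternion_eventually_ne_zero (β₁ β₂ : ℝ) (hE : Efun β₁ β₂ ≠ 0) :
    ∃ n₀ : ℕ, ∀ n ≥ n₀,
      (Nat.fib n : ℝ) ^ 2 + β₁ * (Nat.fib (n + 1) : ℝ) ^ 2
        + β₂ * (Nat.fib (n + 2) : ℝ) ^ 2 + β₁ * β₂ * (Nat.fib (n + 3) : ℝ) ^ 2 ≠ 0 := by
  have hA : normWeight β₁ β₂ (φ ^ 2) ≠ 0 := by
    rw [normWeight_goldenRatio_sq]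
    exact mul_ne_zero (by norm_num) hE
  obtain ⟨n₀, hn₀⟩ :=
    eventually_atTop.1 ((tendsto_five_mul_fibQuatNorm_div β₁ β₂).eventually_ne hA)
  refine ⟨n₀, fun n hn hzero ↦ hn₀ n hn ?_⟩
  change fibQuatNorm β₁ β₂ n = 0 at hzero
  rw [hzero, mul_zero, zero_div]
end

section
/- Let β₁, β₂ ∈ ℝ with E(β₁,β₂) ≠ 0. Then there exists a natural number n₀ such that for all n ≥ n₀, the Fibonacci quaternion F_n is invertible in the generalized quaternion algebra ℍ(β₁,β₂). -/
open Quaternion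

/-- The `n`-th Fibonacci quaternion in `ℍ(β₁,β₂)`, realized as the quaternion
algebra `ℍ[ℝ, -β₁, -β₂]` (so that `e₂² = -β₁`, `e₃² = -β₂`). -/
def FibQuat (β₁ β₂ : ℝ) (n : ℕ) : ℍ[ℝ, -β₁, -β₂] :=
  ⟨(Nat.fib n : ℝ), (Nat.fib (n + 1) : ℝ), (Nat.fib (n + 2) : ℝ), (Nat.fib (n + 3) : ℝ)⟩

/-!
The norm of `F_n` is `f_n² + β₁ f_{n+1}² + β₂ f_{n+2}² + β₁β₂ f_{n+3}²`, and by Binet's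
formula `f_{n+k} / φⁿ → φᵏ / √5`. Hence `n(F_n) / φ²ⁿ → (1 + β₁φ² + β₂φ⁴ + β₁β₂φ⁶) / 5`, which
is `E(β₁,β₂)` because `φ² = φ + 1`. So the norm is eventually nonzero and `F_n` is invertible.
-/

open Filter Topology Real
open scoped goldenRatio

namespace QuaternionAlgebra

variable {R : Type*} [CommRing R] {c₁ c₂ c₃ : R}

theorem isUnit_of_isUnit_re_mul_star {a : ℍ[R,c₁,c₂,c₃]} (h : IsUnit (a * star a).re) :
    IsUnit a := by
  have hunit : IsUnit (a * star a) := by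
    rw [mul_star_eq_coe]
    exact h.map (algebraMap R ℍ[R,c₁,c₂,c₃])
  exact ((Commute.isUnit_mul_iff (star_comm_self' a).symm).mp hunit).1

theorem re_mul_star_of_c₂_eq_zero (a : ℍ[R,c₁,c₃]) :
    (a * star a).re = a.re ^ 2 - c₁ * a.imI ^ 2 - c₃ * a.imJ ^ 2 + c₁ * c₃ * a.imK ^ 2 := by
  simp only [re_mul, re_star, imI_star, imJ_star, imK_star]
  ring

end QuaternionAlgebra

theorem tendsto_fib_div_goldenRatio_pow :
    Tendsto (fun n ↦ (Nat.fib n : ℝ) / φ ^ n) atTop (𝓝 (1 / √5)) := by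
  have hratio : |ψ / φ| < 1 := by
    rw [abs_div, abs_of_pos goldenRatio_pos, div_lt_one goldenRatio_pos, abs_lt]
    constructor <;> linarith [neg_one_lt_goldenConj, goldenConj_neg, one_lt_goldenRatio]
  have hbinet (n : ℕ) : (Nat.fib n : ℝ) / φ ^ n = (1 - (ψ / φ) ^ n) / √5 := by
    rw [coe_fib_eq, div_right_comm, sub_div, div_self (pow_ne_zero n goldenRatio_ne_zero),
      div_pow ψ φ n]
  simp_rw [hbinet]
  simpa using ((tendsto_pow_atTop_nhds_zero_of_abs_lt_one hratio).const_sub 1).div_const √5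

theorem tendsto_fib_add_div_goldenRatio_pow (k : ℕ) :
    Tendsto (fun n ↦ (Nat.fib (n + k) : ℝ) / φ ^ n) atTop (𝓝 (φ ^ k / √5)) := by
  have hshift : Tendsto (fun n ↦ (Nat.fib (n + k) : ℝ) / φ ^ (n + k)) atTop (𝓝 (1 / √5)) :=
    (tendsto_add_atTop_iff_nat k).mpr tendsto_fib_div_goldenRatio_pow
  have hk (n : ℕ) :
      (Nat.fib (n + k) : ℝ) / φ ^ n = φ ^ k * ((Nat.fib (n + k) : ℝ) / φ ^ (n + k)) := by
    rw [pow_add]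
    field_simp [pow_ne_zero n goldenRatio_ne_zero, pow_ne_zero k goldenRatio_ne_zero]
  simp_rw [hk]
  simpa [div_eq_mul_inv] using hshift.const_mul (φ ^ k)

theorem fibQuat_re_mul_star (β₁ β₂ : ℝ) (n : ℕ) :
    (FibQuat β₁ β₂ n * star (FibQuat β₁ β₂ n)).re =
      (Nat.fib n : ℝ) ^ 2 + β₁ * (Nat.fib (n + 1) : ℝ) ^ 2 + β₂ * (Nat.fib (n + 2) : ℝ) ^ 2
        + β₁ * β₂ * (Nat.fib (n + 3) : ℝ) ^ 2 := by
  rw [QuaternionAlgebra.re_mul_star_of_c₂_eq_zero]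
  simp only [FibQuat]
  ring

theorem efun_eq_goldenRatio (β₁ β₂ : ℝ) :
    Efun β₁ β₂ = (1 + β₁ * φ ^ 2 + β₂ * φ ^ 4 + β₁ * β₂ * φ ^ 6) / 5 := by
  have hφ : goldenα = φ := rfl
  rw [Efun, hφ]
  linear_combination
    (-(β₁ + β₂ * (φ ^ 2 + φ + 2) + β₁ * β₂ * (φ ^ 4 + φ ^ 3 + 2 * φ ^ 2 + 3 * φ + 5)) / 5)
      * goldenRatio_sq

theorem tendsto_fibQuat_re_mul_star_div (β₁ β₂ : ℝ) :
    Tendsto (fun n ↦ (FibQuat β₁ β₂ n * star (FibQuat β₁ β₂ n)).re / (φ ^ n) ^ 2) atTop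
      (𝓝 (Efun β₁ β₂)) := by
  have hsplit (n : ℕ) : (FibQuat β₁ β₂ n * star (FibQuat β₁ β₂ n)).re / (φ ^ n) ^ 2 =
      ((Nat.fib n : ℝ) / φ ^ n) ^ 2 + β₁ * ((Nat.fib (n + 1) : ℝ) / φ ^ n) ^ 2
        + β₂ * ((Nat.fib (n + 2) : ℝ) / φ ^ n) ^ 2
        + β₁ * β₂ * ((Nat.fib (n + 3) : ℝ) / φ ^ n) ^ 2 := by
    rw [fibQuat_re_mul_star]
    field_simp [pow_ne_zero n goldenRatio_ne_zero]
  have hlim := (((tendsto_fib_div_goldenRatio_pow.pow 2).add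
      (((tendsto_fib_add_div_goldenRatio_pow 1).pow 2).const_mul β₁)).add
      (((tendsto_fib_add_div_goldenRatio_pow 2).pow 2).const_mul β₂)).add
      (((tendsto_fib_add_div_goldenRatio_pow 3).pow 2).const_mul (β₁ * β₂))
  simp_rw [hsplit]
  convert hlim using 2
  have h5 : √5 ^ 2 = 5 := sq_sqrt (by norm_num)
  rw [efun_eq_goldenRatio]
  field_simp
  rw [h5]
  ring

theorem fib_quaternion_eventually_isUnit (β₁ β₂ : ℝ) (hE : Efun β₁ β₂ ≠ 0) :
    ∃ n₀ : ℕ, ∀ n ≥ n₀, IsUnit (FibQuat β₁ β₂ n) := by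
  obtain ⟨n₀, hn₀⟩ :=
    eventually_atTop.mp ((tendsto_fibQuat_re_mul_star_div β₁ β₂).eventually_ne hE)
  refine ⟨n₀, fun n hn ↦ QuaternionAlgebra.isUnit_of_isUnit_re_mul_star ?_⟩
  exact (div_ne_zero_iff.mp (hn₀ n hn)).1.isUnit
end

section
/- Let p, q be integers not both zero, and β₁, β₂ ∈ ℝ with E(β₁,β₂) ≠ 0 and (p + αq)² ≠ 0, and let h_n be the generalized Fibonacci sequence with h_0 = p, h_1 = q. Then h_n² + β₁h_{n+1}² + β₂h_{n+2}² + β₁β₂h_{n+3}² tends to +∞ or −∞ as n → ∞, the sign of the limit being equal to the sign of E'(β₁,β₂) = (1/5)(p + αq)²·E(β₁,β₂). -/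
/-- Generalized Fibonacci numbers: `h 0 = p`, `h 1 = q`, `h (n+2) = h (n+1) + h n`. -/
def gfib (p q : ℤ) : ℕ → ℤ
  | 0 => p
  | 1 => q
  | (n + 2) => gfib p q (n + 1) + gfib p q n

/-- `E'(β₁,β₂) = (1/5)(p + αq)² E(β₁,β₂)`. -/
noncomputable def E' (p q : ℤ) (β₁ β₂ : ℝ) : ℝ :=
  (1 / 5) * ((p : ℝ) + goldenα * q) ^ 2 * Efun β₁ β₂

noncomputable def gβ : ℝ := (1 - Real.sqrt 5) / 2

lemma s5_sq : Real.sqrt 5 ^ 2 = 5 := Real.sq_sqrt (by norm_num)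

lemma s5_gt : 2 < Real.sqrt 5 := by
  nlinarith [s5_sq, Real.sqrt_nonneg 5]

lemma gα_sq : goldenα ^ 2 = goldenα + 1 := by
  unfold goldenα; linear_combination (1/4) * s5_sq

lemma gβ_sq : gβ ^ 2 = gβ + 1 := by
  unfold gβ; linear_combination (1/4) * s5_sq

lemma hαβ : goldenα * gβ = -1 := by
  unfold goldenα gβ; linear_combination (-1/4) * s5_sq

lemma gα_pos : 0 < goldenα := by
  unfold goldenα; nlinarith [s5_gt]

noncomputable def Ac (p q : ℤ) : ℝ := ((p : ℝ) + goldenα * q) / (Real.sqrt 5 * goldenα)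
noncomputable def Bc (p q : ℤ) : ℝ := p - Ac p q

lemma closed_form (p q : ℤ) : ∀ n, (gfib p q n : ℝ) = Ac p q * goldenα ^ n + Bc p q * gβ ^ n := by
  have hs5 : (0:ℝ) < Real.sqrt 5 := by nlinarith [s5_gt]
  have hα := gα_pos
  intro n
  induction n using Nat.twoStepInduction with
  | zero =>
      simp only [gfib, pow_zero, mul_one, Bc]
      ring
  | one =>
      simp only [gfib, pow_one, Bc, Ac]
      field_simp
      unfold goldenα gβ
      field_simp
      linear_combination ((p:ℝ)*Real.sqrt 5) * s5_sq
  | more n ih2 ih1 =>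
      show ((gfib p q (n+1) + gfib p q n : ℤ) : ℝ) = _
      push_cast
      rw [ih1, ih2]
      have h1 := gα_sq
      have h2 := gβ_sq
      linear_combination (-(Ac p q * goldenα ^ n)) * h1 + (-(Bc p q * gβ ^ n)) * h2

lemma gβ_sq_le : gβ ^ 2 ≤ 1 := by
  have := gβ_sq
  unfold gβ at *
  nlinarith [s5_gt]

lemma gα_sq_gt : 1 < goldenα ^ 2 := by
  nlinarith [gα_sq, gα_pos]

theorem norm_gfib_quaternion_tendsto (p q : ℤ) (hpq : ¬(p = 0 ∧ q = 0))
    (β₁ β₂ : ℝ) (hE : Efun β₁ β₂ ≠ 0) (hα : ((p : ℝ) + goldenα * q) ^ 2 ≠ 0) :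
    (0 < E' p q β₁ β₂ →
      Filter.Tendsto
        (fun n : ℕ => (gfib p q n : ℝ) ^ 2 + β₁ * (gfib p q (n + 1) : ℝ) ^ 2
          + β₂ * (gfib p q (n + 2) : ℝ) ^ 2 + β₁ * β₂ * (gfib p q (n + 3) : ℝ) ^ 2)
        Filter.atTop Filter.atTop) ∧
    (E' p q β₁ β₂ < 0 →
      Filter.Tendsto
        (fun n : ℕ => (gfib p q n : ℝ) ^ 2 + β₁ * (gfib p q (n + 1) : ℝ) ^ 2
          + β₂ * (gfib p q (n + 2) : ℝ) ^ 2 + β₁ * β₂ * (gfib p q (n + 3) : ℝ) ^ 2)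
        Filter.atTop Filter.atBot) := by
  have hs5 : (0:ℝ) < Real.sqrt 5 := by nlinarith [s5_gt]
  set A := Ac p q with hA
  set B := Bc p q with hB
  set C : ℝ := A ^ 2 * (1 + β₁ * goldenα ^ 2 + β₂ * goldenα ^ 4 + β₁ * β₂ * goldenα ^ 6)
    with hCdef
  set K : ℝ := 2 * A * B * (1 + β₁ * (goldenα * gβ) + β₂ * (goldenα * gβ) ^ 2
    + β₁ * β₂ * (goldenα * gβ) ^ 3) with hKdef
  set D : ℝ := B ^ 2 * (1 + β₁ * gβ ^ 2 + β₂ * gβ ^ 4 + β₁ * β₂ * gβ ^ 6) with hDdef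
  -- key decomposition
  have key : ∀ n : ℕ, (gfib p q n : ℝ) ^ 2 + β₁ * (gfib p q (n + 1) : ℝ) ^ 2
      + β₂ * (gfib p q (n + 2) : ℝ) ^ 2 + β₁ * β₂ * (gfib p q (n + 3) : ℝ) ^ 2
      = C * (goldenα ^ 2) ^ n + K * (-1 : ℝ) ^ n + D * (gβ ^ 2) ^ n := by
    intro n
    have e1 : (goldenα ^ 2) ^ n = (goldenα ^ n) ^ 2 := by
      rw [← pow_mul, ← pow_mul, Nat.mul_comm]
    have e2 : (gβ ^ 2) ^ n = (gβ ^ n) ^ 2 := by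
      rw [← pow_mul, ← pow_mul, Nat.mul_comm]
    have e3 : ((-1 : ℝ)) ^ n = goldenα ^ n * gβ ^ n := by
      rw [← mul_pow, hαβ]
    rw [closed_form p q n, closed_form p q (n+1), closed_form p q (n+2),
      closed_form p q (n+3), e1, e2, e3]
    simp only [pow_succ]
    ring
  -- relation between C and E'
  have hA2 : A ^ 2 * goldenα ^ 2 * 5 = ((p : ℝ) + goldenα * q) ^ 2 := by
    rw [hA]
    unfold Ac
    have hαne : goldenα ≠ 0 := ne_of_gt gα_pos
    have hs5ne : Real.sqrt 5 ≠ 0 := ne_of_gt hs5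
    field_simp
    linear_combination (-(((p : ℝ) + goldenα * q) ^ 2)) * s5_sq
  have hEf : 1 + β₁ * goldenα ^ 2 + β₂ * goldenα ^ 4 + β₁ * β₂ * goldenα ^ 6
      = 5 * Efun β₁ β₂ := by
    unfold Efun
    linear_combination (β₁ + β₂ * (goldenα ^ 2 + goldenα + 2)
      + β₁ * β₂ * (goldenα ^ 4 + goldenα ^ 3 + 2 * goldenα ^ 2 + 3 * goldenα + 5)) * gα_sq
  have hC : C * goldenα ^ 2 = 5 * E' p q β₁ β₂ := by
    rw [hCdef]
    unfold E'
    linear_combination (A ^ 2 * goldenα ^ 2) * hEf + (Efun β₁ β₂) * hA2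
  have hα2pos : (0:ℝ) < goldenα ^ 2 := pow_pos gα_pos 2
  -- boundedness of remainder
  have bound : ∀ n : ℕ, |K * (-1 : ℝ) ^ n + D * (gβ ^ 2) ^ n| ≤ |K| + |D| := by
    intro n
    have h1 : |K * (-1 : ℝ) ^ n| = |K| := by
      rw [abs_mul, abs_pow, abs_neg, abs_one, one_pow, mul_one]
    have h2 : |D * (gβ ^ 2) ^ n| ≤ |D| := by
      rw [abs_mul]
      have hle : (gβ ^ 2) ^ n ≤ 1 := by
        calc (gβ ^ 2) ^ n ≤ 1 ^ n := pow_le_pow_left₀ (sq_nonneg _) gβ_sq_le n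
        _ = 1 := one_pow n
      have hnn : (0:ℝ) ≤ (gβ ^ 2) ^ n := pow_nonneg (sq_nonneg _) n
      rw [abs_of_nonneg hnn]
      nlinarith [abs_nonneg D]
    calc |K * (-1 : ℝ) ^ n + D * (gβ ^ 2) ^ n|
        ≤ |K * (-1 : ℝ) ^ n| + |D * (gβ ^ 2) ^ n| := abs_add_le _ _
      _ ≤ |K| + |D| := by rw [h1]; linarith
  have hpow : Filter.Tendsto (fun n : ℕ => (goldenα ^ 2) ^ n) Filter.atTop Filter.atTop :=
    tendsto_pow_atTop_atTop_of_one_lt gα_sq_gt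
  constructor
  · intro hEpos
    have hCpos : 0 < C := by
      by_contra h
      push_neg at h
      nlinarith
    have hl : Filter.Tendsto (fun n : ℕ => C * (goldenα ^ 2) ^ n - (|K| + |D|))
        Filter.atTop Filter.atTop := by
      simpa [sub_eq_add_neg] using
        Filter.tendsto_atTop_add_const_right Filter.atTop (-(|K| + |D|))
          (hpow.const_mul_atTop hCpos)
    refine Filter.tendsto_atTop_mono (fun n => ?_) hl
    rw [key n]
    have := (abs_le.mp (bound n)).1
    linarith
  · intro hEneg
    have hCneg : C < 0 := by
      by_contra h
      push_neg at h
      nlinarith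
    have hl : Filter.Tendsto (fun n : ℕ => C * (goldenα ^ 2) ^ n + (|K| + |D|))
        Filter.atTop Filter.atBot := by
      simpa using
        Filter.tendsto_atBot_add_const_right Filter.atTop (|K| + |D|)
          (hpow.const_mul_atTop_of_neg hCneg)
    refine Filter.tendsto_atBot_mono (fun n => ?_) hl
    rw [key n]
    have := (abs_le.mp (bound n)).2
    linarith
end

section
/- Let β₁, β₂ ∈ ℝ and p, q ∈ ℤ with E'(β₁,β₂) = (1/5)(p+αq)²E(β₁,β₂) ≠ 0. Then there exists a natural number n₀ such that for all n ≥ n₀, the generalized Fibonacci quaternion H_n^{p,q} is invertible in ℍ(β₁,β₂). -/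
open Quaternion

/-- The `n`-th generalized Fibonacci quaternion `H_n^{p,q}` in `ℍ(β₁,β₂)`,
realized as the quaternion algebra `ℍ[ℝ, -β₁, -β₂]`. -/
def GFibQuat (p q : ℤ) (β₁ β₂ : ℝ) (n : ℕ) : ℍ[ℝ, -β₁, -β₂] :=
  ⟨(gfib p q n : ℝ), (gfib p q (n + 1) : ℝ), (gfib p q (n + 2) : ℝ), (gfib p q (n + 3) : ℝ)⟩

/-!
Writing `h_n = A φⁿ + B ψⁿ` (Binet) with `|ψ| < φ`, the norm
`n(H_n) = h_n² + β₁ h_{n+1}² + β₂ h_{n+2}² + β₁β₂ h_{n+3}²` satisfies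
`n(H_n) / φ^(2n) → A² (1 + β₁φ² + β₂φ⁴ + β₁β₂φ⁶) = 5 A² E(β₁,β₂)`.
Since `√5 φ A = p + φ q`, this limit is `5 E'(β₁,β₂) / φ² ≠ 0`, so `n(H_n) ≠ 0` for all large
`n`, and a quaternion of nonzero norm is invertible, with `a⁻¹ = n(a)⁻¹ ā`.
-/

open Filter Topology Real
open scoped goldenRatio

namespace QuaternionAlgebra

variable {R : Type*} [Field R] {c₁ c₂ c₃ : R}

theorem isUnit_of_re_star_mul_self_ne_zero {a : ℍ[R, c₁, c₂, c₃]} (h : (star a * a).re ≠ 0) :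
    IsUnit a := by
  set r := (star a * a).re
  have hl : star a * a = (r : ℍ[R, c₁, c₂, c₃]) := star_mul_eq_coe a
  have hr : a * star a = (r : ℍ[R, c₁, c₂, c₃]) := by rw [← star_comm_self', hl]
  have hrr : ((r⁻¹ : R) : ℍ[R, c₁, c₂, c₃]) * r = 1 := by rw [← coe_mul, inv_mul_cancel₀ h, coe_one]
  refine isUnit_iff_exists.2 ⟨(r⁻¹ : R) * star a, ?_, ?_⟩
  · rw [← mul_assoc, ← coe_commutes, mul_assoc, hr, hrr]
  · rw [mul_assoc, hl, hrr]

theorem re_star_mul_self (a : ℍ[R, c₁, c₃]) :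
    (star a * a).re = a.re ^ 2 - c₁ * a.imI ^ 2 - c₃ * a.imJ ^ 2 + c₁ * c₃ * a.imK ^ 2 := by
  simp only [re_mul, re_star, imI_star, imJ_star, imK_star]
  ring

end QuaternionAlgebra

section FibonacciLike

variable {u : ℕ → ℝ}

theorem eq_binet_of_add_two (hu : ∀ n, u (n + 2) = u (n + 1) + u n) (n : ℕ) :
    u n = (u 1 - ψ * u 0) / √5 * φ ^ n + (φ * u 0 - u 1) / √5 * ψ ^ n := by
  have h5 : √5 ≠ 0 := by positivity
  induction n using Nat.twoStepInduction with
  | zero => field_simp; ring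
  | one => field_simp; rw [← goldenRatio_sub_goldenConj]; ring
  | more n ih₀ ih₁ =>
    rw [hu, ih₀, ih₁]
    linear_combination (-(u 1 - ψ * u 0) / √5 * φ ^ n) * goldenRatio_sq
      + (-(φ * u 0 - u 1) / √5 * ψ ^ n) * goldenConj_sq

theorem abs_goldenConj_div_goldenRatio_lt_one : |ψ / φ| < 1 := by
  rw [abs_div, abs_of_pos goldenRatio_pos, div_lt_one goldenRatio_pos, abs_of_neg goldenConj_neg]
  linarith [neg_one_lt_goldenConj, one_lt_goldenRatio]

theorem tendsto_div_goldenRatio_pow (hu : ∀ n, u (n + 2) = u (n + 1) + u n) :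
    Tendsto (fun n ↦ u n / φ ^ n) atTop (𝓝 ((u 1 - ψ * u 0) / √5)) := by
  have h := (tendsto_const_nhds (x := (u 1 - ψ * u 0) / √5)).add
    ((tendsto_pow_atTop_nhds_zero_of_abs_lt_one
      abs_goldenConj_div_goldenRatio_lt_one).const_mul ((φ * u 0 - u 1) / √5))
  rw [mul_zero, add_zero] at h
  refine h.congr fun n ↦ ?_
  rw [eq_binet_of_add_two hu n, div_pow]
  field_simp

theorem tendsto_add_div_goldenRatio_pow (hu : ∀ n, u (n + 2) = u (n + 1) + u n) (k : ℕ) :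
    Tendsto (fun n ↦ u (n + k) / φ ^ n) atTop (𝓝 ((u 1 - ψ * u 0) / √5 * φ ^ k)) := by
  have h := ((tendsto_div_goldenRatio_pow hu).comp (tendsto_add_atTop_nat k)).mul_const (φ ^ k)
  refine h.congr fun n ↦ ?_
  simp only [Function.comp_apply, pow_add]
  field_simp

theorem eventually_sum_mul_sq_ne_zero (hu : ∀ n, u (n + 2) = u (n + 1) + u n)
    (hu₀ : u 1 - ψ * u 0 ≠ 0) {m : ℕ} (c : Fin m → ℝ) (hc : ∑ k, c k * φ ^ (2 * (k : ℕ)) ≠ 0) :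
    ∀ᶠ n in atTop, ∑ k, c k * u (n + k) ^ 2 ≠ 0 := by
  set A := (u 1 - ψ * u 0) / √5
  have hlim : Tendsto (fun n ↦ ∑ k, c k * (u (n + k) / φ ^ n) ^ 2) atTop
      (𝓝 (∑ k, c k * (A * φ ^ (k : ℕ)) ^ 2)) :=
    tendsto_finsetSum _ fun k _ ↦ ((tendsto_add_div_goldenRatio_pow hu k).pow 2).const_mul (c k)
  have hL : ∑ k, c k * (A * φ ^ (k : ℕ)) ^ 2 ≠ 0 := by
    simp_rw [mul_pow, ← pow_mul', mul_left_comm _ (A ^ 2), ← Finset.mul_sum]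
    exact mul_ne_zero (pow_ne_zero 2 (div_ne_zero hu₀ (by positivity))) hc
  filter_upwards [hlim.eventually_ne hL] with n hn hzero
  apply hn
  simp_rw [div_pow, mul_div_assoc', ← Finset.sum_div, hzero, zero_div]

end FibonacciLike

theorem goldenα_eq_goldenRatio : goldenα = φ := rfl

theorem sum_fin_four_mul_goldenRatio_pow_eq_five_mul_Efun (β₁ β₂ : ℝ) :
    ∑ k, ![1, β₁, β₂, β₁ * β₂] k * φ ^ (2 * (k : ℕ)) = 5 * Efun β₁ β₂ := by
  simp only [Fin.sum_univ_four, Fin.isValue, Fin.coe_ofNat_eq_mod, Matrix.cons_val, Efun,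
    goldenα_eq_goldenRatio]
  linear_combination (β₁ + β₂ * (φ ^ 2 + φ + 2)
      + β₁ * β₂ * (φ ^ 4 + φ ^ 3 + 2 * φ ^ 2 + 3 * φ + 5)) * goldenRatio_sq

theorem gfib_quaternion_eventually_isUnit (p q : ℤ) (β₁ β₂ : ℝ)
    (hE' : (1 / 5) * ((p : ℝ) + goldenα * q) ^ 2 * Efun β₁ β₂ ≠ 0) :
    ∃ n₀ : ℕ, ∀ n ≥ n₀, IsUnit (GFibQuat p q β₁ β₂ n) := by
  obtain ⟨hpq, hE⟩ : (p : ℝ) + φ * q ≠ 0 ∧ Efun β₁ β₂ ≠ 0 := by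
    simpa [goldenα_eq_goldenRatio] using hE'
  set h : ℕ → ℝ := fun n ↦ (gfib p q n : ℝ)
  have hrec : ∀ n, h (n + 2) = h (n + 1) + h n := fun n ↦ by simp [h, gfib]
  have hlead : h 1 - ψ * h 0 ≠ 0 := by
    have : (h 1 - ψ * h 0) * φ = p + φ * q := by
      simp only [h, gfib]
      linear_combination (-(p : ℝ)) * goldenConj_mul_goldenRatio
    exact left_ne_zero_of_mul (this ▸ hpq)
  have hc : ∑ k, ![1, β₁, β₂, β₁ * β₂] k * φ ^ (2 * (k : ℕ)) ≠ 0 := by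
    rw [sum_fin_four_mul_goldenRatio_pow_eq_five_mul_Efun]
    exact mul_ne_zero (by norm_num) hE
  obtain ⟨n₀, hn₀⟩ := eventually_atTop.1 (eventually_sum_mul_sq_ne_zero hrec hlead _ hc)
  refine ⟨n₀, fun n hn ↦ QuaternionAlgebra.isUnit_of_re_star_mul_self_ne_zero ?_⟩
  convert hn₀ n hn using 1
  rw [QuaternionAlgebra.re_star_mul_self]
  simp [GFibQuat, Fin.sum_univ_four, h]
end

section
/- If E(β₁,β₂) > 0, then there exists n' such that for all n ≥ n', the quadratic form q(x₁,x₂) = n(F_n)x₁² + n(F_{n+1})x₂² on ℝ² is positive definite; if E(β₁,β₂) < 0, then there exists n' such that for all n ≥ n' the form is negative definite. -/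
/-- Norm of the `n`-th Fibonacci quaternion in `ℍ(β₁,β₂)`. -/
noncomputable def nrm (β₁ β₂ : ℝ) (n : ℕ) : ℝ :=
  (Nat.fib n : ℝ) ^ 2 + β₁ * (Nat.fib (n + 1) : ℝ) ^ 2
    + β₂ * (Nat.fib (n + 2) : ℝ) ^ 2 + β₁ * β₂ * (Nat.fib (n + 3) : ℝ) ^ 2

/-!
By Binet's formula `5 F_k² = φ^{2k} + ψ^{2k} - 2(-1)^k`, so `nrm n` is `E(β₁,β₂) φ^{2n}` plus a
combination of `ψ^{2n}` and `(-1)^n`, which stays bounded because `|ψ| < 1`. Since `φ² > 1`, both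
diagonal coefficients `nrm n` and `nrm (n+1)` eventually have the sign of `E`.
-/

open Real goldenRatio Filter

lemma coe_fib_sq (k : ℕ) :
    (Nat.fib k : ℝ) ^ 2 = ((φ ^ 2) ^ k + (ψ ^ 2) ^ k - 2 * (-1 : ℝ) ^ k) / 5 := by
  have hφψ : φ ^ k * ψ ^ k = (-1 : ℝ) ^ k := by rw [← mul_pow, goldenRatio_mul_goldenConj]
  rw [coe_fib_eq, div_pow, sq_sqrt (by norm_num : (0 : ℝ) ≤ 5), ← pow_mul, ← pow_mul,
    mul_comm 2 k, pow_mul, pow_mul]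
  linear_combination (-2 / 5 : ℝ) * hφψ

lemma nrm_eq (β₁ β₂ : ℝ) (n : ℕ) :
    nrm β₁ β₂ n = Efun β₁ β₂ * (φ ^ 2) ^ n
      + (1 + β₁ * ψ ^ 2 + β₂ * ψ ^ 4 + β₁ * β₂ * ψ ^ 6) / 5 * (ψ ^ 2) ^ n
      - 2 * (1 - β₁) * (1 + β₂) / 5 * (-1 : ℝ) ^ n := by
  have hα : goldenα = φ := rfl
  rw [nrm, Efun, coe_fib_sq n, coe_fib_sq (n + 1), coe_fib_sq (n + 2), coe_fib_sq (n + 3), hα]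
  simp only [pow_add]
  -- the `φ`-part matches `Efun` once `φ² = φ + 1` reduces `φ², φ⁴, φ⁶` to `aφ + b`
  linear_combination ((φ ^ 2) ^ n / 5 *
    (β₁ + β₂ * (φ ^ 2 + φ + 2) + β₁ * β₂ * (φ ^ 4 + φ ^ 3 + 2 * φ ^ 2 + 3 * φ + 5))) * goldenRatio_sq

lemma exists_abs_nrm_sub_le (β₁ β₂ : ℝ) :
    ∃ M, ∀ n, |nrm β₁ β₂ n - Efun β₁ β₂ * (φ ^ 2) ^ n| ≤ M := by
  set B := (1 + β₁ * ψ ^ 2 + β₂ * ψ ^ 4 + β₁ * β₂ * ψ ^ 6) / 5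
  set C := 2 * (1 - β₁) * (1 + β₂) / 5
  have hψ : |ψ ^ 2| ≤ 1 := by
    rw [abs_pow, sq_le_one_iff_abs_le_one, abs_abs, abs_le]
    exact ⟨neg_one_lt_goldenConj.le, goldenConj_neg.le.trans zero_le_one⟩
  refine ⟨|B| + |C|, fun n => ?_⟩
  calc |nrm β₁ β₂ n - Efun β₁ β₂ * (φ ^ 2) ^ n|
      = |B * (ψ ^ 2) ^ n - C * (-1 : ℝ) ^ n| := by rw [nrm_eq]; congr 1; ring
    _ ≤ |B| * |ψ ^ 2| ^ n + |C| * |(-1 : ℝ)| ^ n := by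
        rw [← abs_pow, ← abs_pow, ← abs_mul, ← abs_mul]; exact abs_sub _ _
    _ ≤ |B| * 1 + |C| * 1 := by
        gcongr
        · exact pow_le_one₀ (abs_nonneg _) hψ
        · simp
    _ = |B| + |C| := by ring

lemma tendsto_atTop_of_abs_sub_const_mul_pow_le {u : ℕ → ℝ} {c r M : ℝ} (hr : 1 < r)
    (hc : 0 < c) (hu : ∀ n, |u n - c * r ^ n| ≤ M) : Tendsto u atTop atTop := by
  have hlower : Tendsto (fun n => c * r ^ n - M) atTop atTop :=
    tendsto_atTop_add_const_right _ _ ((tendsto_pow_atTop_atTop_of_one_lt hr).const_mul_atTop hc)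
  exact tendsto_atTop_mono (fun n => by linarith [(abs_le.1 (hu n)).1]) hlower

lemma tendsto_atBot_of_abs_sub_const_mul_pow_le {u : ℕ → ℝ} {c r M : ℝ} (hr : 1 < r)
    (hc : c < 0) (hu : ∀ n, |u n - c * r ^ n| ≤ M) : Tendsto u atTop atBot := by
  rw [← tendsto_neg_atTop_iff]
  refine tendsto_atTop_of_abs_sub_const_mul_pow_le (M := M) hr (neg_pos.2 hc) fun n => ?_
  rw [← abs_neg]
  convert hu n using 2
  ring

lemma mul_sq_add_mul_sq_pos {a b x₁ x₂ : ℝ} (ha : 0 < a) (hb : 0 < b) (hx : (x₁, x₂) ≠ (0, 0)) :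
    0 < a * x₁ ^ 2 + b * x₂ ^ 2 := by
  rcases eq_or_ne x₁ 0 with rfl | h₁
  · have h₂ : x₂ ≠ 0 := by rintro rfl; exact hx rfl
    positivity
  · positivity

theorem fib_quadratic_form_definite (β₁ β₂ : ℝ) :
    (Efun β₁ β₂ > 0 → ∃ n' : ℕ, ∀ n ≥ n', ∀ x₁ x₂ : ℝ, (x₁, x₂) ≠ (0, 0) →
      nrm β₁ β₂ n * x₁ ^ 2 + nrm β₁ β₂ (n + 1) * x₂ ^ 2 > 0) ∧
    (Efun β₁ β₂ < 0 → ∃ n' : ℕ, ∀ n ≥ n', ∀ x₁ x₂ : ℝ, (x₁, x₂) ≠ (0, 0) →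
      nrm β₁ β₂ n * x₁ ^ 2 + nrm β₁ β₂ (n + 1) * x₂ ^ 2 < 0) := by
  obtain ⟨M, hM⟩ := exists_abs_nrm_sub_le β₁ β₂
  have hφ : 1 < φ ^ 2 := one_lt_pow₀ one_lt_goldenRatio two_ne_zero
  refine ⟨fun hE => ?_, fun hE => ?_⟩
  · obtain ⟨N, hN⟩ := eventually_atTop.1
      ((tendsto_atTop_of_abs_sub_const_mul_pow_le hφ hE hM).eventually_gt_atTop 0)
    exact ⟨N, fun n hn x₁ x₂ hx => mul_sq_add_mul_sq_pos (hN n hn) (hN (n + 1) (by omega)) hx⟩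
  · obtain ⟨N, hN⟩ := eventually_atTop.1
      ((tendsto_atBot_of_abs_sub_const_mul_pow_le hφ hE hM).eventually_lt_atBot 0)
    refine ⟨N, fun n hn x₁ x₂ hx => neg_pos.1 ?_⟩
    have := mul_sq_add_mul_sq_pos (neg_pos.2 (hN n hn)) (neg_pos.2 (hN (n + 1) (by omega))) hx
    linarith
end

section
/- For β₁ = β₂ = −1/2, we have E(−1/2,−1/2) = 3/20 > 0, and for all n ≥ 1, n(F_n) = f_n² − (1/2)f_{n+1}² − (1/2)f_{n+2}² + (1/4)f_{n+3}² > 0. -/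
theorem example_beta_neghalf :
    Efun (-1/2) (-1/2) = 3 / 20 ∧ (3 : ℝ) / 20 > 0 ∧
    ∀ n : ℕ, n ≥ 1 → (Nat.fib n : ℝ) ^ 2 - (1/2) * (Nat.fib (n + 1) : ℝ) ^ 2
      - (1/2) * (Nat.fib (n + 2) : ℝ) ^ 2 + (1/4) * (Nat.fib (n + 3) : ℝ) ^ 2 > 0 := by
  refine ⟨by unfold Efun; ring, by norm_num, ?_⟩
  intro n hn
  have h2 : Nat.fib (n + 2) = Nat.fib n + Nat.fib (n + 1) := Nat.fib_add_two
  have h3 : Nat.fib (n + 3) = Nat.fib (n + 1) + Nat.fib (n + 2) := Nat.fib_add_two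
  have key : (Nat.fib n : ℝ) ^ 2 - (1/2) * (Nat.fib (n + 1) : ℝ) ^ 2
      - (1/2) * (Nat.fib (n + 2) : ℝ) ^ 2 + (1/4) * (Nat.fib (n + 3) : ℝ) ^ 2
      = (3/4) * (Nat.fib n : ℝ) ^ 2 := by
    rw [h3, h2]; push_cast; ring
  rw [key]
  have hpos : 0 < Nat.fib n := Nat.fib_pos.mpr hn
  positivity
end
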